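/- Povzner inequality with angular cutoff. Let N ≥ 2, s > 2, and let b : [−1,1] → ℝ be integrable as a function of σ on S^{N-1} (i.e., σ ↦ b(u·σ) is integrable for unit vectors u) and satisfy b(x) ≥ b₀ for some b₀ > 0 and all x. Then there exist constants C₊ > 0 and K₋ > 0 (depending on N, s, b) such that for all v, v_* ∈ ℝ^N with v ≠ v_*: ∫_{S^{N-1}} (|v'_*|^s + |v'|^s − |v_*|^s − |v|^s) b(cos θ) dσ ≤ C₊ (|v|^{s−2}|v_*|² + |v_*|^{s−2}|v|²) − K₋ (|v|^s + |v_*|^s), where v' = (v+v_*)/2 + (|v−v_*|/2)σ, v'_* = (v+v_*)/2 − (|v−v_*|/2)σ, cos θ = σ·(v−v_*)/|v−v_*|, and dσ is the surface measure on S^{N-1}. -/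

import Mathlib

/-!
Write `x = |v|²`, `y = |v_*|²`, `p = s/2`, `a = |v'_*|²`, `a' = |v'|²`. On the sphere
`a + a' = x + y` and `|a - a'| = |v - v_*| |(v + v_*)·σ| ≤ (x + y) |e·σ|`, with `e` the direction
of `v + v_*`, so convexity of `t ↦ t^p` gives `a^p + a'^p ≤ (x + y)^p (1 - κ (1 - |e·σ|))` with
`κ = 1 - 2^(1-p) > 0`. Integrating against `b ≥ b₀` and using the rotation invariance of the
surface measure bounds the gain by `(x + y)^p ∫ b - κ b₀ c_N (x + y)^p`, where
`c_N = ∫ (1 - |e·σ|) dσ` is positive as soon as `N ≥ 2`. It remains to bound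
`(x + y)^p - x^p - y^p` by `2^p (x^(p-1) y + y^(p-1) x)` and to use `x^p + y^p ≤ (x + y)^p`.
-/

open MeasureTheory Real RealInnerProductSpace ENNReal

noncomputable section

/-- Euclidean space `ℝ^N`. -/
abbrev Rn (N : ℕ) := EuclideanSpace ℝ (Fin N)

/-- Surface measure on the unit sphere `S^{N-1} ⊂ ℝ^N`: the `(N-1)`-dimensional
Hausdorff measure restricted to the sphere. -/
def sphMeas (N : ℕ) : Measure (Rn N) :=
  (μH[(N : ℝ) - 1]).restrict (Metric.sphere (0 : Rn N) 1)

/-- Post-collisional velocity `v' = (v+v_*)/2 + (|v-v_*|/2) σ`. -/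
def vP (N : ℕ) (v w σ : Rn N) : Rn N :=
  (2:ℝ)⁻¹ • (v + w) + (‖v - w‖ / 2) • σ

/-- Post-collisional velocity `v'_* = (v+v_*)/2 - (|v-v_*|/2) σ`. -/
def vSP (N : ℕ) (v w σ : Rn N) : Rn N :=
  (2:ℝ)⁻¹ • (v + w) - (‖v - w‖ / 2) • σ

/-- Cosine of the deviation angle: `cos θ = σ · (v - v_*)/|v - v_*|`. -/
def cosTheta (N : ℕ) (v w σ : Rn N) : ℝ := ⟪σ, v - w⟫ / ‖v - w‖

lemma rpow_add_rpow_le_of_abs_sub_le {p c a b : ℝ} (hp : 1 ≤ p) (ha : 0 ≤ a) (hb : 0 ≤ b)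
    (hc : |a - b| ≤ (a + b) * c) :
    a ^ p + b ^ p ≤ (a + b) ^ p * (1 - (1 - 2 ^ (1 - p)) * (1 - c)) := by
  wlog hba : b ≤ a generalizing a b
  · rw [add_comm a b, add_comm (a ^ p)]
    exact this hb ha (by rwa [abs_sub_comm, add_comm]) (by linarith)
  have hp0 : p ≠ 0 := by positivity
  rcases (add_nonneg ha hb).eq_or_lt with hT | hT
  · obtain rfl : a = 0 := by linarith
    obtain rfl : b = 0 := by linarith
    simp [zero_rpow hp0]
  set T := a + b
  set t := (a - b) / T
  have ht0 : 0 ≤ t := div_nonneg (by linarith) hT.le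
  have ht1 : t ≤ 1 := (div_le_one hT).2 (by linarith)
  have htc : t ≤ c := by
    rw [div_le_iff₀ hT, ← abs_of_nonneg (by linarith : 0 ≤ a - b)]; linarith
  have hκ : 0 ≤ 1 - (2 : ℝ) ^ (1 - p) := by
    linarith [rpow_le_one_of_one_le_of_nonpos (by norm_num : (1 : ℝ) ≤ 2)
      (by linarith : 1 - p ≤ 0)]
  -- `a` and `b` are the convex combinations `(1-t)·T/2 + t·T` and `(1-t)·T/2 + t·0`
  have hconv (z : ℝ) (hz : 0 ≤ z) :
      ((1 - t) * (T / 2) + t * z) ^ p ≤ (1 - t) * (T / 2) ^ p + t * z ^ p :=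
    (convexOn_rpow hp).2 (by simp only [Set.mem_Ici]; positivity) hz (by linarith) ht0 (by ring)
  have ha' := hconv T hT.le
  have hb' := hconv 0 le_rfl
  rw [show (1 - t) * (T / 2) + t * T = a by simp only [t]; field_simp; ring] at ha'
  rw [show (1 - t) * (T / 2) + t * 0 = b by simp only [t]; field_simp; ring, zero_rpow hp0] at hb'
  have hhalf : (T / 2) ^ p = T ^ p * 2 ^ (1 - p) / 2 := by
    rw [div_rpow hT.le (by norm_num), Real.rpow_sub (by norm_num), Real.rpow_one]; field_simp
  have hTp : 0 ≤ T ^ p := by positivity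
  calc a ^ p + b ^ p ≤ T ^ p * (1 - (1 - 2 ^ (1 - p)) * (1 - t)) := by
        rw [hhalf] at ha' hb'; nlinarith
    _ ≤ T ^ p * (1 - (1 - 2 ^ (1 - p)) * (1 - c)) := by gcongr

lemma rpow_add_sub_rpow_sub_rpow_le {p x y : ℝ} (hp : 1 ≤ p) (hx : 0 ≤ x) (hy : 0 ≤ y) :
    (x + y) ^ p - x ^ p - y ^ p ≤ 2 ^ p * (x ^ (p - 1) * y + y ^ (p - 1) * x) := by
  wlog hyx : y ≤ x generalizing x y
  · have := this hy hx (by linarith)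
    rw [add_comm y x] at this
    linarith
  have hp0 : p ≠ 0 := by positivity
  rcases hx.eq_or_lt with rfl | hx0
  · obtain rfl : y = 0 := by linarith
    simp [zero_rpow hp0]
  set t := y / x
  have ht0 : 0 ≤ t := div_nonneg hy hx0.le
  have ht1 : t ≤ 1 := (div_le_one hx0).2 hyx
  have hconv : ((1 - t) * x + t * (2 * x)) ^ p ≤ (1 - t) * x ^ p + t * (2 * x) ^ p :=
    (convexOn_rpow hp).2 hx (by simp only [Set.mem_Ici]; positivity) (by linarith) ht0 (by ring)
  rw [show (1 - t) * x + t * (2 * x) = x + y by simp only [t]; field_simp; ring,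
    mul_rpow (by norm_num) hx] at hconv
  have htx : t * x ^ p = x ^ (p - 1) * y := by
    simp only [t]; rw [rpow_sub_one hx0.ne']; field_simp
  have h2p : 1 ≤ (2 : ℝ) ^ p := one_le_rpow (by norm_num) (by linarith)
  have : 0 ≤ x ^ (p - 1) * y := by positivity
  have : 0 ≤ y ^ (p - 1) * x := by positivity
  have : 0 ≤ y ^ p := by positivity
  nlinarith

lemma sq_rpow_half {t : ℝ} (ht : 0 ≤ t) (r : ℝ) : (t ^ 2) ^ (r / 2) = t ^ r := by
  rw [← rpow_natCast_mul ht]; congr 1; push_cast; ring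

lemma exists_norm_eq_one_eq_norm_smul {E : Type*} [NormedAddCommGroup E] [NormedSpace ℝ E]
    [Nontrivial E] (x : E) : ∃ e : E, ‖e‖ = 1 ∧ x = ‖x‖ • e := by
  rcases eq_or_ne x 0 with rfl | hx
  · exact (exists_norm_eq E zero_le_one).imp fun e he => ⟨he, by simp⟩
  · exact ⟨NormedSpace.normalize x, NormedSpace.norm_normalize_eq_one_iff.2 hx,
      (NormedSpace.norm_smul_normalize x).symm⟩

lemma norm_sub_mul_norm_add_le {E : Type*} [NormedAddCommGroup E] [InnerProductSpace ℝ E]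
    (v w : E) : ‖v - w‖ * ‖v + w‖ ≤ ‖v‖ ^ 2 + ‖w‖ ^ 2 := by
  have := parallelogram_law_with_norm ℝ v w
  nlinarith [sq_nonneg (‖v + w‖ - ‖v - w‖)]

lemma sphMeas_map_linearIsometryEquiv (N : ℕ) (R : Rn N ≃ₗᵢ[ℝ] Rn N) :
    (sphMeas N).map R = sphMeas N := by
  have hpre : R ⁻¹' Metric.sphere 0 1 = Metric.sphere 0 1 := by
    ext x; simp
  calc (sphMeas N).map R = ((μH[(N : ℝ) - 1]).map R).restrict (Metric.sphere 0 1) := by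
        rw [Measure.restrict_map R.continuous.measurable Metric.isClosed_sphere.measurableSet,
          hpre]
        rfl
    _ = sphMeas N := by
        rw [show ⇑R = ⇑R.toIsometryEquiv from rfl, R.toIsometryEquiv.map_hausdorffMeasure]
        rfl

lemma integral_sphMeas_comp_linearIsometryEquiv (N : ℕ) (R : Rn N ≃ₗᵢ[ℝ] Rn N)
    (g : Rn N → ℝ) : ∫ σ, g (R σ) ∂sphMeas N = ∫ σ, g σ ∂sphMeas N := by
  conv_rhs => rw [← sphMeas_map_linearIsometryEquiv N R]
  exact (R.toHomeomorph.measurableEmbedding.integral_map g).symm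

lemma integral_sphMeas_inner_eq {N : ℕ} (g : ℝ → ℝ) {u u' : Rn N} (h : ‖u‖ = ‖u'‖) :
    ∫ σ, g ⟪u, σ⟫ ∂sphMeas N = ∫ σ, g ⟪u', σ⟫ ∂sphMeas N := by
  set R := Submodule.reflection (ℝ ∙ (u - u'))ᗮ
  have hR : R u = u' := Submodule.reflection_sub h
  rw [← integral_sphMeas_comp_linearIsometryEquiv N R (fun σ => g ⟪u', σ⟫)]
  congr 1 with σ
  rw [← hR, R.inner_map_map]

lemma ae_sphMeas_norm_eq_one (N : ℕ) : ∀ᵐ σ ∂sphMeas N, ‖σ‖ = 1 := by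
  filter_upwards [ae_restrict_mem Metric.isClosed_sphere.measurableSet] with σ hσ
  simpa using hσ

lemma exists_ae_sphMeas_norm_le {N : ℕ} {f : Rn N → ℝ} (hf : Continuous f) :
    ∃ C, ∀ᵐ σ ∂sphMeas N, ‖f σ‖ ≤ C := by
  obtain ⟨C, hC⟩ := (isCompact_sphere (0 : Rn N) 1).exists_bound_of_continuousOn hf.continuousOn
  exact ⟨C, (ae_restrict_mem Metric.isClosed_sphere.measurableSet).mono hC⟩

lemma integrable_sphMeas_continuous_mul {N : ℕ} {f g : Rn N → ℝ} (hf : Continuous f)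
    (hg : Integrable g (sphMeas N)) : Integrable (fun σ => f σ * g σ) (sphMeas N) := by
  obtain ⟨C, hC⟩ := exists_ae_sphMeas_norm_le hf
  exact hg.bdd_mul hf.aestronglyMeasurable hC

lemma Continuous.integrable_sphMeas {N : ℕ} [IsFiniteMeasure (sphMeas N)] {f : Rn N → ℝ}
    (hf : Continuous f) : Integrable f (sphMeas N) := by
  simpa using integrable_sphMeas_continuous_mul hf (integrable_const (1 : ℝ))

lemma isFiniteMeasure_of_integrable_of_le {α : Type*} [MeasurableSpace α] {μ : Measure α}
    {f : α → ℝ} {c : ℝ} (hf : Integrable f μ) (hc : 0 < c) (hcf : ∀ᵐ x ∂μ, c ≤ f x) :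
    IsFiniteMeasure μ := by
  have : Integrable (fun _ => c) μ :=
    hf.mono' aestronglyMeasurable_const <| by
      filter_upwards [hcf] with x hx
      rwa [norm_of_nonneg hc.le]
  exact (integrable_const_iff.1 this).resolve_left hc.ne'

lemma hausdorffMeasure_pos_of_subset_image {X ι : Type*} [EMetricSpace X] [MeasurableSpace X]
    [BorelSpace X] [Fintype ι] {f : X → ι → ℝ} {C : NNReal} (hf : LipschitzWith C f) {A : Set X}
    {U : Set (ι → ℝ)} (hU : IsOpen U) (hne : U.Nonempty) (hUA : U ⊆ f '' A) :
    0 < μH[Fintype.card ι] A := by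
  have hpos : 0 < μH[Fintype.card ι] (f '' A) := by
    rw [hausdorffMeasure_pi_real]
    exact (hU.measure_pos volume hne).trans_le (measure_mono hUA)
  exact (ENNReal.mul_pos_iff.1 <| hpos.trans_le <|
    hf.hausdorffMeasure_image_le (Nat.cast_nonneg _) A).2

-- dropping the first coordinate maps the sphere minus its poles 1-Lipschitz onto the
-- punctured open unit ball of `ℝ^(K+1)`
lemma hausdorffMeasure_support_one_sub_abs_inter_sphere_pos (K : ℕ) :
    0 < μH[((K + 2 : ℕ) : ℝ) - 1]
      (Function.support (fun σ : Rn (K + 2) => 1 - |σ 0|) ∩ Metric.sphere 0 1) := by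
  set P : Rn (K + 2) → Fin (K + 1) → ℝ := fun σ i => σ i.succ
  have hP : LipschitzWith 1 P := LipschitzWith.of_dist_le_mul fun σ τ => by
    simpa using (dist_pi_le_iff dist_nonneg).2 fun i : Fin (K + 1) =>
      PiLp.dist_apply_le σ τ i.succ
  set U : Set (Fin (K + 1) → ℝ) := (fun y => ∑ i, y i ^ 2) ⁻¹' Set.Ioo 0 1
  have hU : IsOpen U := isOpen_Ioo.preimage (by fun_prop)
  have hUne : U.Nonempty := ⟨Pi.single 0 (1 / 2), by simp [U, Pi.single_apply, ite_pow]; norm_num⟩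
  have hUP : U ⊆ P '' (Function.support (fun σ : Rn (K + 2) => 1 - |σ 0|) ∩ Metric.sphere 0 1) := by
    intro y ⟨hq0, hq1⟩
    set q := ∑ i, y i ^ 2
    refine ⟨WithLp.toLp 2 (Fin.cons (√(1 - q)) y), ⟨?_, ?_⟩, rfl⟩
    · have : √(1 - q) < 1 := (sqrt_lt' one_pos).2 (by linarith)
      simp only [Function.mem_support, Fin.cons_zero, abs_of_nonneg (sqrt_nonneg _)]
      linarith
    · rw [Metric.mem_sphere, dist_zero_right, EuclideanSpace.norm_eq, Fin.sum_univ_succ]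
      simp only [Fin.cons_zero, Fin.cons_succ, Real.norm_eq_abs, sq_abs,
        sq_sqrt (by linarith : 0 ≤ 1 - q)]
      simp [q]
  have hcard : ((K + 2 : ℕ) : ℝ) - 1 = Fintype.card (Fin (K + 1)) := by
    rw [Fintype.card_fin]; push_cast; ring
  rw [hcard]
  exact hausdorffMeasure_pos_of_subset_image hP hU hUne hUP

lemma integral_sphMeas_one_sub_abs_inner_pos {N : ℕ} (hN : 2 ≤ N) [IsFiniteMeasure (sphMeas N)]
    {e : Rn N} (he : ‖e‖ = 1) : 0 < ∫ σ, 1 - |⟪e, σ⟫| ∂sphMeas N := by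
  obtain ⟨K, rfl⟩ : ∃ K, N = K + 2 := ⟨N - 2, by omega⟩
  set e₀ : Rn (K + 2) := EuclideanSpace.single 0 1
  rw [integral_sphMeas_inner_eq (fun t => 1 - |t|) (he.trans (by simp [e₀]) : ‖e‖ = ‖e₀‖)]
  simp only [e₀, EuclideanSpace.inner_single_left, map_one, one_mul]
  have hnonneg : 0 ≤ᵐ[sphMeas (K + 2)] fun σ : Rn (K + 2) => 1 - |σ 0| := by
    filter_upwards [ae_sphMeas_norm_eq_one (K + 2)] with σ hσ
    simpa [hσ] using PiLp.norm_apply_le σ 0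
  rw [integral_pos_iff_support_of_nonneg_ae hnonneg
      (by fun_prop : Continuous fun σ : Rn (K + 2) => 1 - |σ 0|).integrable_sphMeas,
    sphMeas, Measure.restrict_apply' Metric.isClosed_sphere.measurableSet]
  exact hausdorffMeasure_support_one_sub_abs_inter_sphere_pos K

section Collision

variable {N : ℕ} (v w σ : Rn N)

lemma norm_vP_sq : ‖vP N v w σ‖ ^ 2
    = ‖v + w‖ ^ 2 / 4 + ‖v - w‖ / 2 * ⟪v + w, σ⟫ + (‖v - w‖ / 2) ^ 2 * ‖σ‖ ^ 2 := by
  rw [vP, norm_add_sq_real, norm_smul, norm_smul, real_inner_smul_left, real_inner_smul_right,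
    norm_inv, Real.norm_two, Real.norm_of_nonneg (by positivity : 0 ≤ ‖v - w‖ / 2)]
  ring

lemma norm_vSP_sq : ‖vSP N v w σ‖ ^ 2
    = ‖v + w‖ ^ 2 / 4 - ‖v - w‖ / 2 * ⟪v + w, σ⟫ + (‖v - w‖ / 2) ^ 2 * ‖σ‖ ^ 2 := by
  rw [vSP, norm_sub_sq_real, norm_smul, norm_smul, real_inner_smul_left, real_inner_smul_right,
    norm_inv, Real.norm_two, Real.norm_of_nonneg (by positivity : 0 ≤ ‖v - w‖ / 2)]
  ring

lemma norm_vSP_sq_add_norm_vP_sq {σ : Rn N} (hσ : ‖σ‖ = 1) :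
    ‖vSP N v w σ‖ ^ 2 + ‖vP N v w σ‖ ^ 2 = ‖v‖ ^ 2 + ‖w‖ ^ 2 := by
  rw [norm_vP_sq, norm_vSP_sq, hσ]
  linarith [parallelogram_law_with_norm ℝ v w]

lemma abs_norm_vSP_sq_sub_norm_vP_sq :
    |‖vSP N v w σ‖ ^ 2 - ‖vP N v w σ‖ ^ 2| = ‖v - w‖ * |⟪v + w, σ⟫| := by
  have : ‖vSP N v w σ‖ ^ 2 - ‖vP N v w σ‖ ^ 2 = -(‖v - w‖ * ⟪v + w, σ⟫) := by
    rw [norm_vP_sq, norm_vSP_sq]; ring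
  rw [this, abs_neg, abs_mul, abs_norm]

lemma cosTheta_eq_inner_normalize :
    cosTheta N v w σ = ⟪NormedSpace.normalize (v - w), σ⟫ := by
  rw [cosTheta, NormedSpace.normalize, real_inner_smul_left, real_inner_comm, div_eq_inv_mul]

end Collision

lemma norm_vSP_rpow_add_norm_vP_rpow_le {N : ℕ} {s : ℝ} (hs : 2 ≤ s) {v w σ e : Rn N}
    (hσ : ‖σ‖ = 1) (he : v + w = ‖v + w‖ • e) :
    ‖vSP N v w σ‖ ^ s + ‖vP N v w σ‖ ^ s
      ≤ (‖v‖ ^ 2 + ‖w‖ ^ 2) ^ (s / 2) * (1 - (1 - 2 ^ (1 - s / 2)) * (1 - |⟪e, σ⟫|)) := by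
  rw [← sq_rpow_half (norm_nonneg (vSP N v w σ)), ← sq_rpow_half (norm_nonneg (vP N v w σ)),
    ← norm_vSP_sq_add_norm_vP_sq v w hσ]
  refine rpow_add_rpow_le_of_abs_sub_le (by linarith) (sq_nonneg _) (sq_nonneg _) ?_
  have hinner : |⟪v + w, σ⟫| = ‖v + w‖ * |⟪e, σ⟫| := by
    conv_lhs => rw [he]
    rw [real_inner_smul_left, abs_mul, abs_norm]
  rw [abs_norm_vSP_sq_sub_norm_vP_sq, norm_vSP_sq_add_norm_vP_sq v w hσ, hinner, ← mul_assoc]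
  exact mul_le_mul_of_nonneg_right (norm_sub_mul_norm_add_le v w) (abs_nonneg _)

lemma integral_povzner_le {N : ℕ} {s b₀ : ℝ} {b : ℝ → ℝ} (hs : 2 ≤ s) (hb₀ : 0 ≤ b₀)
    (hlow : ∀ x, b₀ ≤ b x)
    (hint : ∀ u : Rn N, ‖u‖ = 1 → Integrable (fun σ => b ⟪u, σ⟫) (sphMeas N))
    [IsFiniteMeasure (sphMeas N)] {e₀ : Rn N} (he₀ : ‖e₀‖ = 1) {v w : Rn N} (hvw : v ≠ w) :
    ∫ σ, (‖vSP N v w σ‖ ^ s + ‖vP N v w σ‖ ^ s - ‖w‖ ^ s - ‖v‖ ^ s) * b (cosTheta N v w σ)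
        ∂sphMeas N
      ≤ ((‖v‖ ^ 2 + ‖w‖ ^ 2) ^ (s / 2) - ‖v‖ ^ s - ‖w‖ ^ s) * ∫ σ, b ⟪e₀, σ⟫ ∂sphMeas N
        - (1 - 2 ^ (1 - s / 2)) * (‖v‖ ^ 2 + ‖w‖ ^ 2) ^ (s / 2) * b₀
          * ∫ σ, 1 - |⟪e₀, σ⟫| ∂sphMeas N := by
  set E := (‖v‖ ^ 2 + ‖w‖ ^ 2) ^ (s / 2)
  set κ := 1 - (2 : ℝ) ^ (1 - s / 2)
  have hκ : 0 ≤ κ := by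
    linarith [rpow_le_one_of_one_le_of_nonpos (by norm_num : (1 : ℝ) ≤ 2)
      (by linarith : 1 - s / 2 ≤ 0)]
  set u := NormedSpace.normalize (v - w)
  have hu : ‖u‖ = 1 := NormedSpace.norm_normalize_eq_one_iff.2 (sub_ne_zero.2 hvw)
  have : Nontrivial (Rn N) := ⟨⟨e₀, 0, ne_zero_of_norm_ne_zero (by simp [he₀])⟩⟩
  obtain ⟨e, he, hvwe⟩ := exists_norm_eq_one_eq_norm_smul (v + w)
  simp_rw [cosTheta_eq_inner_normalize]
  rw [integral_sphMeas_inner_eq b (he₀.trans hu.symm),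
    integral_sphMeas_inner_eq (fun t => 1 - |t|) (he₀.trans he.symm)]
  have hcont : Continuous fun σ : Rn N => 1 - |⟪e, σ⟫| := by fun_prop
  calc _ ≤ ∫ σ, (E - ‖v‖ ^ s - ‖w‖ ^ s) * b ⟪u, σ⟫ - κ * E * b₀ * (1 - |⟪e, σ⟫|) ∂sphMeas N := by
        refine integral_mono_ae ?_ (((hint u hu).const_mul _).sub
          (hcont.integrable_sphMeas.const_mul _)) ?_
        · refine integrable_sphMeas_continuous_mul ?_ (hint u hu)
          unfold vSP vP
          fun_prop (disch := positivity)
        filter_upwards [ae_sphMeas_norm_eq_one N] with σ hσ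
        have hG := norm_vSP_rpow_add_norm_vP_rpow_le hs hσ hvwe
        have hc : |⟪e, σ⟫| ≤ 1 := by simpa [he, hσ] using abs_real_inner_le_norm e σ
        have hB : b₀ ≤ b ⟪u, σ⟫ := hlow _
        have hκE : 0 ≤ κ * E * (1 - |⟪e, σ⟫|) := by positivity
        nlinarith [mul_le_mul_of_nonneg_left hB hκE]
    _ = _ := by
        rw [integral_sub ((hint u hu).const_mul _) (hcont.integrable_sphMeas.const_mul _),
          integral_const_mul, integral_const_mul]

/-- **Povzner inequality with angular cutoff**: for `s > 2` and an angular kernel `b`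
integrable on the sphere and bounded below by `b₀ > 0`, there are constants `C₊, K₋ > 0`
such that for all `v ≠ v_*`,
`∫_{S^{N-1}} (|v'_*|^s + |v'|^s - |v_*|^s - |v|^s) b(cos θ) dσ
  ≤ C₊ (|v|^{s-2}|v_*|² + |v_*|^{s-2}|v|²) - K₋ (|v|^s + |v_*|^s)`. -/
theorem povzner_inequality
    (N : ℕ) (hN : 2 ≤ N) (s : ℝ) (hs : 2 < s)
    (b : ℝ → ℝ) (b₀ : ℝ) (hb₀ : 0 < b₀) (hlow : ∀ x : ℝ, b₀ ≤ b x)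
    (hint : ∀ u : Rn N, ‖u‖ = 1 → Integrable (fun σ : Rn N => b ⟪u, σ⟫) (sphMeas N)) :
    ∃ Cpl Kmi : ℝ, 0 < Cpl ∧ 0 < Kmi ∧
      ∀ v w : Rn N, v ≠ w →
        (∫ σ : Rn N,
            (‖vSP N v w σ‖ ^ s + ‖vP N v w σ‖ ^ s - ‖w‖ ^ s - ‖v‖ ^ s) *
              b (cosTheta N v w σ) ∂(sphMeas N))
          ≤ Cpl * (‖v‖ ^ (s - 2) * ‖w‖ ^ 2 + ‖w‖ ^ (s - 2) * ‖v‖ ^ 2)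
            - Kmi * (‖v‖ ^ s + ‖w‖ ^ s) := by
  obtain ⟨e₀, he₀⟩ : ∃ e : Rn N, ‖e‖ = 1 := ⟨EuclideanSpace.single ⟨0, by omega⟩ 1, by simp⟩
  have : IsFiniteMeasure (sphMeas N) :=
    isFiniteMeasure_of_integrable_of_le (hint e₀ he₀) hb₀ (.of_forall fun _ => hlow _)
  set β := ∫ σ, b ⟪e₀, σ⟫ ∂sphMeas N
  set γ := ∫ σ, 1 - |⟪e₀, σ⟫| ∂sphMeas N
  set κ := 1 - (2 : ℝ) ^ (1 - s / 2)
  have hβ : 0 ≤ β := integral_nonneg fun σ => hb₀.le.trans (hlow _)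
  have hγ : 0 < γ := integral_sphMeas_one_sub_abs_inner_pos hN he₀
  have hκ : 0 < κ := by
    linarith [rpow_lt_one_of_one_lt_of_neg (by norm_num : (1 : ℝ) < 2)
      (by linarith : 1 - s / 2 < 0)]
  refine ⟨(β + 1) * 2 ^ (s / 2), κ * b₀ * γ, by positivity, by positivity, fun v w hvw => ?_⟩
  have hcross := rpow_add_sub_rpow_sub_rpow_le (p := s / 2) (by linarith)
    (sq_nonneg ‖v‖) (sq_nonneg ‖w‖)
  have hsuper := add_rpow_le_rpow_add (sq_nonneg ‖v‖) (sq_nonneg ‖w‖) (by linarith : 1 ≤ s / 2)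
  rw [show s / 2 - 1 = (s - 2) / 2 by ring] at hcross
  simp only [sq_rpow_half (norm_nonneg _)] at hcross hsuper
  have hcross0 : 0 ≤ ‖v‖ ^ (s - 2) * ‖w‖ ^ 2 + ‖w‖ ^ (s - 2) * ‖v‖ ^ 2 := by positivity
  calc _ ≤ ((‖v‖ ^ 2 + ‖w‖ ^ 2) ^ (s / 2) - ‖v‖ ^ s - ‖w‖ ^ s) * β
          - κ * (‖v‖ ^ 2 + ‖w‖ ^ 2) ^ (s / 2) * b₀ * γ :=
        integral_povzner_le hs.le hb₀.le hlow hint he₀ hvw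
    _ ≤ _ := by
        nlinarith [mul_le_mul_of_nonneg_left hcross hβ,
          mul_le_mul_of_nonneg_left hsuper (by positivity : 0 ≤ κ * b₀ * γ),
          mul_nonneg (by positivity : (0 : ℝ) ≤ 2 ^ (s / 2)) hcross0]
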